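/- arXiv:1608.08391 — 6 statements merged into one kernel-verified Lean document; each statement's English description precedes it below -/
import Mathlib

section
/- Let n ≥ 1 and 1 ≤ α, β ≤ n. Let p, q ∈ ℂⁿ be linearly independent and define P, Q : ℂ^{n×n} → ℂ by P(z) = Σ_j p_j z_{jα} and Q(z) = Σ_k q_k z_{kβ}. Let f = P/Q on the open subset W_Q = {z ∈ U(n) : Q(z) ≠ 0} of U(n). Then f is harmonic on W_Q (i.e. τ(f) vanishes identically on W_Q) if and only if α = β. -/
/-!
Along `s ↦ z * exp (s • Z)` a linear functional `L` has first and second derivatives `L (z * Z)`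
and `L (z * Z * Z)` at `s = 0`, so `τ (L / M)` is a combination of `∑_{Z ∈ B} L (z * Z * Z)` and of
`∑_{Z ∈ B} L (z * Z) * M (z * Z)`. Both sums follow from `∑_{Z ∈ B} Z i j * Z k l = -δ_{jk} δ_{il}`:
the first is `-n * L z`, and for the column functionals `P_γ z = (p ᵥ* z) γ` the second is
`-(P_δ z * Q_γ z)`. Hence `τ (P_α / Q_β) = 2 (P_β Q_α - P_α Q_β) / Q_β²`, which vanishes when
`α = β`. When `α ≠ β`, linear independence gives `a, b` with `q a ≠ 0` and `p a q b - p b q a ≠ 0`,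
and a permutation matrix whose columns `β, α` are `e_a, e_b` is a unitary point where `τ ≠ 0`.
-/

open Matrix

noncomputable section

/-- The matrix unit `E_{rs}` in `ℂ^{n×n}`. -/
def matE (n : ℕ) (r s : Fin n) : Matrix (Fin n) (Fin n) ℂ :=
  Matrix.single r s 1

/-- `Y_{rs} = (E_{rs} − E_{sr})/√2`. -/
def matY (n : ℕ) (r s : Fin n) : Matrix (Fin n) (Fin n) ℂ :=
  ((Real.sqrt 2 : ℂ))⁻¹ • (matE n r s - matE n s r)

/-- `X_{rs} = (E_{rs} + E_{sr})/√2`. -/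
def matX (n : ℕ) (r s : Fin n) : Matrix (Fin n) (Fin n) ℂ :=
  ((Real.sqrt 2 : ℂ))⁻¹ • (matE n r s + matE n s r)

/-- `Z(f)(p) = (d/ds)|₀ f(p·exp(sZ))`: derivative of `f` at `p` along the
left-invariant vector field determined by `Z`. -/
def lieD1 {n : ℕ} (f : Matrix (Fin n) (Fin n) ℂ → ℂ)
    (p Z : Matrix (Fin n) (Fin n) ℂ) : ℂ :=
  deriv (fun s : ℝ => f (p * NormedSpace.exp ((s : ℂ) • Z))) 0

/-- `Z²(f)(p) = (d²/ds²)|₀ f(p·exp(sZ))`. -/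
def lieD2 {n : ℕ} (f : Matrix (Fin n) (Fin n) ℂ → ℂ)
    (p Z : Matrix (Fin n) (Fin n) ℂ) : ℂ :=
  deriv (deriv (fun s : ℝ => f (p * NormedSpace.exp ((s : ℂ) • Z)))) 0

/-- The Laplace–Beltrami operator (tension field) on `U(n)`:
`τ(f)(p) = Σ_{Z ∈ B} Z²(f)(p)` for the standard orthonormal basis
`B = {Y_{rs}, iX_{rs} : r < s} ∪ {iE_{tt}}` of `u(n)`. -/
def tauU (n : ℕ) (f : Matrix (Fin n) (Fin n) ℂ → ℂ)
    (p : Matrix (Fin n) (Fin n) ℂ) : ℂ :=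
  (∑ r : Fin n, ∑ s : Fin n, if r < s then
      lieD2 f p (matY n r s) + lieD2 f p (Complex.I • matX n r s) else 0)
  + ∑ t : Fin n, lieD2 f p (Complex.I • matE n t t)

/-- The conformality operator on `U(n)`:
`κ(f,h)(p) = Σ_{Z ∈ B} Z(f)(p)·Z(h)(p)`. -/
def kappaU (n : ℕ) (f h : Matrix (Fin n) (Fin n) ℂ → ℂ)
    (p : Matrix (Fin n) (Fin n) ℂ) : ℂ :=
  (∑ r : Fin n, ∑ s : Fin n, if r < s then
      lieD1 f p (matY n r s) * lieD1 h p (matY n r s)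
        + lieD1 f p (Complex.I • matX n r s) * lieD1 h p (Complex.I • matX n r s) else 0)
  + ∑ t : Fin n, lieD1 f p (Complex.I • matE n t t) * lieD1 h p (Complex.I • matE n t t)

theorem deriv_deriv_div {𝕜 𝕜' : Type*} [NontriviallyNormedField 𝕜] [NontriviallyNormedField 𝕜']
    [NormedAlgebra 𝕜 𝕜'] {a a' a'' b b' b'' : 𝕜 → 𝕜'} {x : 𝕜}
    (ha : ∀ s, HasDerivAt a (a' s) s) (ha' : ∀ s, HasDerivAt a' (a'' s) s)
    (hb : ∀ s, HasDerivAt b (b' s) s) (hb' : ∀ s, HasDerivAt b' (b'' s) s) (hx : b x ≠ 0) :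
    deriv (deriv fun s => a s / b s) x =
      ((a'' x * b x - a x * b'' x) * b x - 2 * (a' x * b x - a x * b' x) * b' x) / b x ^ 3 := by
  have hderiv : deriv (fun s => a s / b s) =ᶠ[nhds x]
      fun s => (a' s * b s - a s * b' s) / (b s * b s) :=
    ((hb x).continuousAt.eventually_ne hx).mono fun s hs => by
      simpa [sq] using ((ha s).fun_div (hb s) hs).deriv
  have hnum := ((ha' x).fun_mul (hb x)).fun_sub ((ha x).fun_mul (hb' x))
  rw [hderiv.deriv_eq, (hnum.fun_div ((hb x).fun_mul (hb x)) (mul_ne_zero hx hx)).deriv]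
  field_simp
  ring

theorem hasDerivAt_map_mul_exp_smul {ι : Type*} [Fintype ι] [DecidableEq ι]
    (L : Matrix ι ι ℂ →ₗ[ℂ] ℂ) (z Z : Matrix ι ι ℂ) (s : ℝ) :
    HasDerivAt (fun s : ℝ => L (z * NormedSpace.exp ((s : ℂ) • Z)))
      (L (z * NormedSpace.exp ((s : ℂ) • Z) * Z)) s := by
  let _ : NormedRing (Matrix ι ι ℂ) := Matrix.linftyOpNormedRing
  let _ : NormedAlgebra ℂ (Matrix ι ι ℂ) := Matrix.linftyOpNormedAlgebra
  have h := (L ∘ₗ LinearMap.mulLeft ℂ z).toContinuousLinearMap.hasFDerivAt.comp_hasDerivAt (s : ℂ)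
    (hasDerivAt_exp_smul_const Z (s : ℂ))
  exact h.comp_ofReal.congr_deriv (by rw [mul_assoc]; rfl)

theorem lieD2_div {n : ℕ} (L M : Matrix (Fin n) (Fin n) ℂ →ₗ[ℂ] ℂ)
    (z Z : Matrix (Fin n) (Fin n) ℂ) (hz : M z ≠ 0) :
    lieD2 (fun w => L w / M w) z Z =
      ((L (z * Z * Z) * M z - L z * M (z * Z * Z)) * M z
        - 2 * (L (z * Z) * M z - L z * M (z * Z)) * M (z * Z)) / M z ^ 3 := by
  have h1 (N : Matrix (Fin n) (Fin n) ℂ →ₗ[ℂ] ℂ) := hasDerivAt_map_mul_exp_smul N z Z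
  have h2 (N : Matrix (Fin n) (Fin n) ℂ →ₗ[ℂ] ℂ) :=
    hasDerivAt_map_mul_exp_smul (N ∘ₗ LinearMap.mulRight ℂ Z) z Z
  simp only [LinearMap.comp_apply, LinearMap.mulRight_apply] at h2
  rw [lieD2, deriv_deriv_div (h1 L) (h2 L) (h1 M) (h2 M) (by simpa using hz)]
  simp

theorem Finset.sum_sum_ite_lt_add_sum_diag {ι M : Type*} [Fintype ι] [LinearOrder ι]
    [AddCommMonoid M] (g : ι → ι → M) :
    (∑ r, ∑ s, if r < s then g r s + g s r else 0) + ∑ t, g t t = ∑ r, ∑ s, g r s := by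
  have hsplit (r s : ι) : (if r < s then g r s else 0) + (if s < r then g r s else 0)
      + (if r = s then g r s else 0) = g r s := by
    rcases lt_trichotomy r s with h | rfl | h
    · simp [h, h.not_gt, h.ne]
    · simp
    · simp [h, h.not_gt, h.ne']
  calc _ = (∑ r, ∑ s, if r < s then g r s else 0) + (∑ r, ∑ s, if s < r then g r s else 0)
        + ∑ r, ∑ s, if r = s then g r s else 0 := by
        rw [Finset.sum_comm (f := fun r s => if s < r then g r s else 0)]
        simp [ite_add_zero, Finset.sum_add_distrib]
    _ = _ := by simp only [← Finset.sum_add_distrib, hsplit]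

section BasisSum

variable {n : ℕ} {M N : Type*} [AddCommMonoid M] [AddCommMonoid N]

/-- `φ ↦ ∑_{Z ∈ B} φ Z` over the orthonormal basis `B` of `u(n)` used in `tauU`. -/
def uBasisSum (n : ℕ) : (Matrix (Fin n) (Fin n) ℂ → M) →+ M where
  toFun φ := (∑ r : Fin n, ∑ s : Fin n,
      if r < s then φ (matY n r s) + φ (Complex.I • matX n r s) else 0)
    + ∑ t : Fin n, φ (Complex.I • matE n t t)
  map_zero' := by simp
  map_add' φ ψ := by
    simp only [Pi.add_apply, Finset.sum_add_distrib, add_add_add_comm, ite_add_zero]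
    abel

theorem tauU_eq_uBasisSum (f : Matrix (Fin n) (Fin n) ℂ → ℂ) (z : Matrix (Fin n) (Fin n) ℂ) :
    tauU n f z = uBasisSum n (lieD2 f z) := rfl

theorem map_uBasisSum (L : M →+ N) (φ : Matrix (Fin n) (Fin n) ℂ → M) :
    L (uBasisSum n φ) = uBasisSum n (L ∘ φ) := by
  simp [uBasisSum, map_sum, apply_ite L]

theorem uBasisSum_sum {ι : Type*} (s : Finset ι) (φ : ι → Matrix (Fin n) (Fin n) ℂ → M) :
    uBasisSum n (fun Z => ∑ i ∈ s, φ i Z) = ∑ i ∈ s, uBasisSum n (φ i) := by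
  rw [← map_sum, Finset.sum_fn]

theorem uBasisSum_add (φ ψ : Matrix (Fin n) (Fin n) ℂ → M) :
    uBasisSum n (fun Z => φ Z + ψ Z) = uBasisSum n φ + uBasisSum n ψ :=
  map_add (uBasisSum n) φ ψ

theorem uBasisSum_const_mul {R : Type*} [NonUnitalNonAssocSemiring R] (c : R)
    (φ : Matrix (Fin n) (Fin n) ℂ → R) :
    uBasisSum n (fun Z => c * φ Z) = c * uBasisSum n φ :=
  (map_uBasisSum (AddMonoidHom.mulLeft c) φ).symm

theorem matY_apply_mul_add_I_smul_matX_apply_mul (r s i j k l : Fin n) :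
    matY n r s i j * matY n r s k l + (Complex.I • matX n r s) i j * (Complex.I • matX n r s) k l
      = -(matE n r s i j * matE n s r k l) + -(matE n s r i j * matE n r s k l) := by
  have hsqrt : ((Real.sqrt 2 : ℂ))⁻¹ ^ 2 = 2⁻¹ := by
    rw [inv_pow, ← Complex.ofReal_pow, Real.sq_sqrt zero_le_two]; norm_num
  simp only [matY, matX, Matrix.smul_apply, Matrix.sub_apply, Matrix.add_apply, smul_eq_mul]
  set a := matE n r s i j
  set b := matE n s r i j
  set c := matE n r s k l
  set d := matE n s r k l
  linear_combination (-2 * (a * d + b * c)) * hsqrt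
    + ((Real.sqrt 2 : ℂ))⁻¹ ^ 2 * (a + b) * (c + d) * Complex.I_sq

theorem uBasisSum_entry_mul_entry (i j k l : Fin n) :
    uBasisSum n (fun Z => Z i j * Z k l) = if j = k ∧ i = l then -1 else 0 := by
  have hdiag (t : Fin n) : (Complex.I • matE n t t) i j * (Complex.I • matE n t t) k l
      = -(matE n t t i j * matE n t t k l) := by
    simp only [Matrix.smul_apply, smul_eq_mul]
    linear_combination (matE n t t i j * matE n t t k l) * Complex.I_sq
  simp only [uBasisSum, AddMonoidHom.coe_mk, ZeroHom.coe_mk, matY_apply_mul_add_I_smul_matX_apply_mul,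
    hdiag]
  refine (Finset.sum_sum_ite_lt_add_sum_diag
    fun r s => -(matE n r s i j * matE n s r k l)).trans ?_
  simp only [matE, single_apply, ite_and, mul_ite, mul_one, mul_zero, Finset.sum_neg_distrib,
    Finset.sum_ite_eq', Finset.mem_univ, ↓reduceIte]
  split_ifs <;> grind

theorem uBasisSum_mul_self :
    uBasisSum n (fun Z => Z * Z) = -(n : ℂ) • (1 : Matrix (Fin n) (Fin n) ℂ) := by
  ext i k
  have hentry := map_uBasisSum (Matrix.entryAddMonoidHom ℂ i k) (fun Z => Z * Z)
  simp only [Matrix.entryAddMonoidHom_apply, Function.comp_def, Matrix.mul_apply,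
    uBasisSum_sum, uBasisSum_entry_mul_entry] at hentry
  simp [hentry, Matrix.one_apply]

theorem uBasisSum_map_mul_mul_self (L : Matrix (Fin n) (Fin n) ℂ →ₗ[ℂ] ℂ)
    (z : Matrix (Fin n) (Fin n) ℂ) :
    uBasisSum n (fun Z => L (z * Z * Z)) = -n * L z := by
  have h := map_uBasisSum (L ∘ₗ LinearMap.mulLeft ℂ z).toAddMonoidHom (fun Z => Z * Z)
  simp only [uBasisSum_mul_self, LinearMap.toAddMonoidHom_coe] at h
  simpa [Function.comp_def, mul_assoc] using h.symm

theorem uBasisSum_vecMul_mul_vecMul (z : Matrix (Fin n) (Fin n) ℂ) (v w : Fin n → ℂ)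
    (γ δ : Fin n) :
    uBasisSum n (fun Z => (v ᵥ* (z * Z)) γ * (w ᵥ* (z * Z)) δ) = -((v ᵥ* z) δ * (w ᵥ* z) γ) := by
  have hcol (u : Fin n → ℂ) (ε : Fin n) (Z : Matrix (Fin n) (Fin n) ℂ) :
      (u ᵥ* (z * Z)) ε = ∑ m, (u ᵥ* z) m * Z m ε := by
    rw [← Matrix.vecMul_vecMul]; rfl
  have hprod (Z : Matrix (Fin n) (Fin n) ℂ) : (v ᵥ* (z * Z)) γ * (w ᵥ* (z * Z)) δ
      = ∑ m, ∑ m', (v ᵥ* z) m * (w ᵥ* z) m' * (Z m γ * Z m' δ) := by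
    simp only [hcol, Finset.sum_mul_sum, mul_mul_mul_comm]
  simp [hprod, uBasisSum_sum, uBasisSum_const_mul, uBasisSum_entry_mul_entry, ite_and]

end BasisSum

theorem tauU_vecMul_div {n : ℕ} (z : Matrix (Fin n) (Fin n) ℂ) (v w : Fin n → ℂ) (γ δ : Fin n)
    (hz : (w ᵥ* z) δ ≠ 0) :
    tauU n (fun x => (v ᵥ* x) γ / (w ᵥ* x) δ) z
      = 2 * ((v ᵥ* z) δ * (w ᵥ* z) γ - (v ᵥ* z) γ * (w ᵥ* z) δ) / (w ᵥ* z) δ ^ 2 := by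
  let col (u : Fin n → ℂ) (ε : Fin n) : Matrix (Fin n) (Fin n) ℂ →ₗ[ℂ] ℂ :=
    LinearMap.proj ε ∘ₗ Matrix.vecMulBilin ℂ ℂ u
  have hlieD2 (Z : Matrix (Fin n) (Fin n) ℂ) :
      lieD2 (fun x => col v γ x / col w δ x) z Z
        = (col w δ z)⁻¹ * col v γ (z * Z * Z)
          + -(col v γ z * (col w δ z)⁻¹ ^ 2) * col w δ (z * Z * Z)
          + -(2 * (col w δ z)⁻¹ ^ 2) * (col v γ (z * Z) * col w δ (z * Z))
          + 2 * col v γ z * (col w δ z)⁻¹ ^ 3 * (col w δ (z * Z) * col w δ (z * Z)) := by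
    rw [lieD2_div _ _ z Z hz]
    field_simp
    ring
  change uBasisSum n (lieD2 (fun x => col v γ x / col w δ x) z) = _
  rw [funext hlieD2]
  simp only [uBasisSum_add, uBasisSum_const_mul, uBasisSum_map_mul_mul_self]
  simp only [col, LinearMap.comp_apply, LinearMap.proj_apply, Matrix.vecMulBilin_apply,
    uBasisSum_vecMul_mul_vecMul]
  field_simp
  ring

theorem exists_mul_sub_mul_ne_zero_of_linearIndependent {K ι : Type*} [Field K] {p q : ι → K}
    (hpq : LinearIndependent K ![p, q]) {a : ι} (ha : q a ≠ 0) :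
    ∃ b, p a * q b - p b * q a ≠ 0 := by
  by_contra! h
  have hcomb : q a • p + (-p a) • q = 0 := funext fun b => by
    simp only [Pi.add_apply, Pi.smul_apply, smul_eq_mul, Pi.zero_apply]
    linear_combination -h b
  exact ha (LinearIndependent.pair_iff.mp hpq _ _ hcomb).1

theorem Equiv.Perm.permMatrix_mem_unitaryGroup {ι R : Type*} [Fintype ι] [DecidableEq ι]
    [CommRing R] [StarRing R] (σ : Equiv.Perm ι) : σ.permMatrix R ∈ Matrix.unitaryGroup ι R := by
  rw [Matrix.mem_unitaryGroup_iff, Matrix.star_eq_conjTranspose, Matrix.conjTranspose_permMatrix,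
    ← Matrix.permMatrix_mul, inv_mul_cancel, Matrix.permMatrix_one]

theorem harmonic_quotient_linear_unitary_general (n : ℕ) (α β : Fin n)
    (p q : Fin n → ℂ) (hpq : LinearIndependent ℂ ![p, q]) :
    (∀ z : Matrix (Fin n) (Fin n) ℂ, z ∈ Matrix.unitaryGroup (Fin n) ℂ →
        (∑ k, q k * z k β) ≠ 0 →
        tauU n (fun w => (∑ j, p j * w j α) / (∑ k, q k * w k β)) z = 0)
      ↔ α = β := by
  refine ⟨fun hharm => ?_, fun hαβ z _ hz => ?_⟩
  · by_contra hαβ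
    obtain ⟨a, ha⟩ : ∃ a, q a ≠ 0 := Function.ne_iff.mp (show q ≠ 0 by simpa using hpq.ne_zero 1)
    obtain ⟨b, hab⟩ := exists_mul_sub_mul_ne_zero_of_linearIndependent hpq ha
    obtain ⟨σ, hσβ, hσα⟩ := MulAction.is_two_pretransitive_iff.mp
      (Equiv.Perm.isMultiplyPretransitive (Fin n) 2) (Ne.symm hαβ)
      (show a ≠ b by rintro rfl; exact hab (sub_self _))
    have hcol (u : Fin n → ℂ) (γ : Fin n) : (u ᵥ* σ⁻¹.permMatrix ℂ) γ = u (σ γ) := by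
      rw [Matrix.vecMul_permMatrix]; rfl
    have hQ : (q ᵥ* σ⁻¹.permMatrix ℂ) β ≠ 0 := by
      rwa [hcol, ← Equiv.Perm.smul_def, hσβ]
    have hτ := (tauU_vecMul_div _ p q α β hQ).symm.trans
      (hharm _ (Equiv.Perm.permMatrix_mem_unitaryGroup σ⁻¹) hQ)
    simp only [hcol, ← Equiv.Perm.smul_def, hσα, hσβ] at hτ
    simp [ha, hab] at hτ
  · subst hαβ
    exact (tauU_vecMul_div z p q α α hz).trans (by rw [sub_self, mul_zero, zero_div])

/-- with `P(z) = Σ_j p_j z_{jα}` and `Q(z) = Σ_k q_k z_{kβ}` for linearly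
independent `p, q ∈ ℂⁿ`, the quotient `f = P/Q` is harmonic on
`W_Q = {z ∈ U(n) : Q(z) ≠ 0}` if and only if `α = β`. -/
theorem harmonic_quotient_linear_unitary (n : ℕ) (hn : 1 ≤ n) (α β : Fin n)
    (p q : Fin n → ℂ) (hpq : LinearIndependent ℂ ![p, q]) :
    (∀ z : Matrix (Fin n) (Fin n) ℂ, z ∈ Matrix.unitaryGroup (Fin n) ℂ →
        (∑ k, q k * z k β) ≠ 0 →
        tauU n (fun w => (∑ j, p j * w j α) / (∑ k, q k * w k β)) z = 0)
      ↔ α = β :=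
  harmonic_quotient_linear_unitary_general n α β p q hpq
end
end

section
/- Let n ≥ 1 be an integer and f_n : ℂ∖{0} → ℂ be defined by f_n(z) = (z/conj(z))ⁿ. Then for every positive integer r and every z ∈ ℂ∖{0}, the iterated Laplacian satisfies (Δʳ f_n)(z) = (−4/|z|²)ʳ · (∏_{k=1}^r (n² − (k−1)²)) · f_n(z). -/
noncomputable section

/-- The Euclidean Laplacian on `ℂ ≅ ℝ²`:
`Δf(z) = ∂²f/∂x²(z) + ∂²f/∂y²(z)`, where the second partials are computed as second
derivatives along the coordinate directions. -/
def lapC (f : ℂ → ℂ) (z : ℂ) : ℂ :=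
  deriv (deriv (fun t : ℝ => f (z + (t : ℂ)))) 0
    + deriv (deriv (fun t : ℝ => f (z + (t : ℂ) * Complex.I))) 0

/-- The iterated Laplacian: `Δ⁰f = f`, `Δʳf = Δ(Δ^{r−1}f)`. -/
def lapIter : ℕ → (ℂ → ℂ) → (ℂ → ℂ)
  | 0, f => f
  | r + 1, f => lapC (lapIter r f)

/-!
On the monomials `z^a z̄^b` (`a b : ℤ`, `z ≠ 0`) the Laplacian acts as `4 ∂ ∂̄`,
`Δ (z^a z̄^b) = 4ab z^(a-1) z̄^(b-1)`. Since `f_n = z^n z̄^(-n)`, iterating gives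
`Δʳ f_n = ∏_{k<r} 4(n-k)(-n-k) · z^(n-r) z̄^(-n-r) = (-4)^r ∏_{k<r} (n² - k²) · |z|^(-2r) f_n`.
-/

open Complex ComplexConjugate Filter Topology

lemma lapC_congr {f g : ℂ → ℂ} {z : ℂ} (h : f =ᶠ[𝓝 z] g) : lapC f z = lapC g z := by
  have hline : ∀ c : ℂ, Tendsto (fun t : ℝ => z + t * c) (𝓝 0) (𝓝 z) := fun c => by
    have hcont : Continuous fun t : ℝ => z + t * c := by fun_prop
    simpa using hcont.tendsto 0
  have h1 : (fun t : ℝ => f (z + t)) =ᶠ[𝓝 0] fun t => g (z + t) :=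
    h.comp_tendsto (by simpa using hline 1)
  have hI : (fun t : ℝ => f (z + t * I)) =ᶠ[𝓝 0] fun t => g (z + t * I) :=
    h.comp_tendsto (hline I)
  rw [lapC, lapC, h1.deriv.deriv_eq, hI.deriv.deriv_eq]

lemma lapC_const_mul (c : ℂ) (f : ℂ → ℂ) (z : ℂ) :
    lapC (fun w => c * f w) z = c * lapC f z := by
  simp only [lapC, deriv_const_mul_field', mul_add]

def zConjMonomial (a b : ℤ) (z : ℂ) : ℂ := z ^ a * conj z ^ b

lemma hasDerivAt_zConjMonomial_line (a b : ℤ) {z c : ℂ} {t : ℝ} (h : z + t * c ≠ 0) :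
    HasDerivAt (fun s : ℝ => zConjMonomial a b (z + s * c))
      (a * c * zConjMonomial (a - 1) b (z + t * c)
        + b * conj c * zConjMonomial a (b - 1) (z + t * c)) t := by
  have hline : HasDerivAt (fun s : ℝ => z + s * c) c t := by
    simpa using ((hasDerivAt_id (t : ℂ)).mul_const c).const_add z |>.comp_ofReal
  have hconj : HasDerivAt (fun s : ℝ => conj (z + s * c)) (conj c) t := hline.star
  have hzpow := (hasDerivAt_zpow a _ (Or.inl h)).comp t hline
  have hconj_zpow :=
    (hasDerivAt_zpow b _ (Or.inl ((map_ne_zero _).mpr h))).comp t hconj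
  refine (hzpow.mul hconj_zpow).congr_deriv ?_
  simp only [zConjMonomial, Function.comp_apply]
  ring

lemma deriv_deriv_zConjMonomial_line (a b : ℤ) {z : ℂ} (c : ℂ) (hz : z ≠ 0) :
    deriv (deriv fun t : ℝ => zConjMonomial a b (z + t * c)) 0
      = a * (a - 1) * c ^ 2 * zConjMonomial (a - 2) b z
        + 2 * a * b * (c * conj c) * zConjMonomial (a - 1) (b - 1) z
        + b * (b - 1) * conj c ^ 2 * zConjMonomial a (b - 2) z := by
  have hnear : ∀ᶠ t : ℝ in 𝓝 0, z + t * c ≠ 0 := by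
    have hcont : Continuous fun t : ℝ => z + t * c := by fun_prop
    simpa using (hcont.tendsto 0).eventually_ne (by simpa using hz)
  have hderiv : deriv (fun t : ℝ => zConjMonomial a b (z + t * c)) =ᶠ[𝓝 0]
      fun t => a * c * zConjMonomial (a - 1) b (z + t * c)
        + b * conj c * zConjMonomial a (b - 1) (z + t * c) := by
    filter_upwards [hnear] with t ht
    exact (hasDerivAt_zConjMonomial_line a b ht).deriv
  have hz' : z + ((0 : ℝ) : ℂ) * c ≠ 0 := by simpa using hz
  rw [hderiv.deriv_eq]
  refine (((hasDerivAt_zConjMonomial_line (a - 1) b hz').const_mul (a * c)).add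
      ((hasDerivAt_zConjMonomial_line a (b - 1) hz').const_mul (b * conj c))).deriv.trans ?_
  simp only [ofReal_zero, zero_mul, add_zero, sub_sub, show (1 + 1 : ℤ) = 2 by norm_num]
  push_cast
  ring

lemma lapC_zConjMonomial (a b : ℤ) {z : ℂ} (hz : z ≠ 0) :
    lapC (zConjMonomial a b) z = 4 * a * b * zConjMonomial (a - 1) (b - 1) z := by
  have h := congrArg₂ (· + ·) (deriv_deriv_zConjMonomial_line a b 1 hz)
    (deriv_deriv_zConjMonomial_line a b I hz)
  simp only [mul_one] at h
  rw [lapC, h]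
  -- the `c²` and `c̄²` terms cancel between `c = 1` and `c = I`, while `c c̄ = 1` for both
  simp only [map_one, conj_I, one_pow, mul_one, I_sq, neg_sq, mul_neg, I_mul_I, neg_neg]
  ring

lemma lapIter_zConjMonomial (a b : ℤ) (r : ℕ) {z : ℂ} (hz : z ≠ 0) :
    lapIter r (zConjMonomial a b) z
      = (∏ k ∈ Finset.range r, 4 * ((a : ℂ) - k) * (b - k)) * zConjMonomial (a - r) (b - r) z := by
  induction r generalizing z with
  | zero => simp [lapIter]
  | succ r ih =>
    have hnear : lapIter r (zConjMonomial a b) =ᶠ[𝓝 z] fun w =>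
        (∏ k ∈ Finset.range r, 4 * ((a : ℂ) - k) * (b - k)) * zConjMonomial (a - r) (b - r) w := by
      filter_upwards [compl_singleton_mem_nhds hz] with w hw
      exact ih hw
    rw [lapIter, lapC_congr hnear, lapC_const_mul, lapC_zConjMonomial _ _ hz,
      Finset.prod_range_succ, sub_sub, sub_sub]
    push_cast
    ring

lemma zConjMonomial_sub_natCast (a b : ℤ) (k : ℕ) {z : ℂ} (hz : z ≠ 0) :
    zConjMonomial (a - k) (b - k) z = zConjMonomial a b z / (z * conj z) ^ k := by
  have hz' : conj z ≠ 0 := (map_ne_zero _).mpr hz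
  simp only [zConjMonomial, zpow_sub₀ hz, zpow_sub₀ hz', zpow_natCast, mul_pow]
  ring

lemma prod_range_four_mul_sub_mul_neg_sub (x : ℂ) (r : ℕ) :
    ∏ k ∈ Finset.range r, 4 * (x - k) * (-x - k)
      = (-4) ^ r * ∏ k ∈ Finset.Icc 1 r, (x ^ 2 - ((k : ℂ) - 1) ^ 2) := by
  induction r with
  | zero => simp
  | succ r ih =>
    rw [Finset.prod_range_succ, ih, Finset.prod_Icc_succ_top (by omega), pow_succ]
    push_cast
    ring

theorem lapIter_z_div_conj_pow_general (n : ℕ) (r : ℕ)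
    (z : ℂ) (hz : z ≠ 0) :
    lapIter r (fun w => (w / starRingEnd ℂ w) ^ n) z
      = (-4 / (((‖z‖ : ℝ) : ℂ)) ^ 2) ^ r
        * (∏ k ∈ Finset.Icc 1 r, ((n : ℂ) ^ 2 - ((k : ℂ) - 1) ^ 2))
        * (z / starRingEnd ℂ z) ^ n := by
  have hf : (fun w => (w / conj w) ^ n) = zConjMonomial n (-n) := by
    funext w
    simp [zConjMonomial, div_eq_mul_inv, mul_pow, zpow_neg]
  rw [hf, lapIter_zConjMonomial _ _ _ hz, zConjMonomial_sub_natCast _ _ _ hz, Int.cast_neg,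
    Int.cast_natCast, prod_range_four_mul_sub_mul_neg_sub, ← Complex.mul_conj', ← hf]
  ring

/-- for `f_n(z) = (z/conj z)ⁿ`, every positive integer `r` and every
`z ≠ 0`, `(Δʳ f_n)(z) = (−4/|z|²)ʳ · ∏_{k=1}^r (n² − (k−1)²) · f_n(z)`. -/
theorem lapIter_z_div_conj_pow (n : ℕ) (hn : 1 ≤ n) (r : ℕ) (hr : 1 ≤ r)
    (z : ℂ) (hz : z ≠ 0) :
    lapIter r (fun w => (w / starRingEnd ℂ w) ^ n) z
      = (-4 / (((‖z‖ : ℝ) : ℂ)) ^ 2) ^ r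
        * (∏ k ∈ Finset.Icc 1 r, ((n : ℂ) ^ 2 - ((k : ℂ) - 1) ^ 2))
        * (z / starRingEnd ℂ z) ^ n :=
  lapIter_z_div_conj_pow_general n r z hz

end
end

section
/- Let p, q ∈ ℂ⁴ be linearly independent with (q,q) = 0, where (u,v) = Σ_{i=1}^4 u_i v_i is the complex-bilinear dot product. Define f̂ on the open set V = {x ∈ ℝ⁴ : Σ_i q_i x_i ≠ 0} by f̂(x) = (Σ_i p_i x_i)/(Σ_i q_i x_i). Then for all x ∈ V: (i) Δf̂(x) = −2(p,q)/(Σ_i q_i x_i)², and (ii) the function x ↦ |x|² · Δf̂(x) is harmonic on V, i.e. Δ(x ↦ |x|² Δf̂(x)) = 0 on V. In particular, if (p,q) ≠ 0 then Δf̂ does not vanish on V while Δ(|x|²Δf̂) = 0. -/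
/-!
Along the coordinate line `t ↦ x + t eᵢ` the function `f̂` is the Möbius function
`(L + t pᵢ)/(M + t qᵢ)`, with second derivative `-2qᵢ(pᵢM - Lqᵢ)/M³` at `0`; summing over `i` and
using `(q,q) = 0` gives `Δf̂ = -2(p,q)/M²`. Hence near `x` the function `|y|²Δf̂(y)` restricts to
`(s + 2t xᵢ + t²)·K/(M + t qᵢ)²` on the same lines, with second derivative
`2K/M² - 8xᵢqᵢK/M³ + 6s qᵢ²K/M⁴`. Summing, `(q,x) = M` and `(q,q) = 0` leave `4·2K/M² - 8K/M² = 0`: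
the cancellation happens exactly in dimension four.
-/

noncomputable section

/-- The Euclidean Laplacian on `ℝ⁴`, applied to complex-valued functions:
`Δf(x) = Σ_{i=1}^4 ∂²f/∂x_i²(x)`, where the second partials are computed as second
derivatives along the coordinate directions. -/
def lap4 (f : (Fin 4 → ℝ) → ℂ) (x : Fin 4 → ℝ) : ℂ :=
  ∑ i : Fin 4, deriv (deriv (fun t : ℝ => f (x + t • (Pi.single i 1 : Fin 4 → ℝ)))) 0

open Filter Topology

theorem deriv_deriv_eq_of_eventually_hasDerivAt {f f' : ℝ → ℂ} {f'' : ℂ} {t₀ : ℝ}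
    (hf : ∀ᶠ t in 𝓝 t₀, HasDerivAt f (f' t) t) (hf' : HasDerivAt f' f'' t₀) :
    deriv (deriv f) t₀ = f'' := by
  have hderiv : deriv f =ᶠ[𝓝 t₀] f' := hf.mono fun t ht => ht.deriv
  rw [hderiv.deriv_eq, hf'.deriv]

section Affine

variable (a b c d : ℂ)

theorem hasDerivAt_affine (t : ℝ) : HasDerivAt (fun t : ℝ => a + t * b) b t := by
  simpa using ((hasDerivAt_id t).ofReal_comp.mul_const b).const_add a

theorem eventually_affine_ne_zero (hc : c ≠ 0) : ∀ᶠ t : ℝ in 𝓝 0, c + t * d ≠ 0 :=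
  (hasDerivAt_affine c d 0).continuousAt.eventually_ne (by simpa using hc)

theorem hasDerivAt_affine_div_affine {t : ℝ} (ht : c + t * d ≠ 0) :
    HasDerivAt (fun t : ℝ => (a + t * b) / (c + t * d)) ((b * c - a * d) / (c + t * d) ^ 2) t :=
  ((hasDerivAt_affine a b t).div (hasDerivAt_affine c d t) ht).congr_deriv (by ring)

theorem hasDerivAt_const_div_affine_pow (K : ℂ) (n : ℕ) {t : ℝ} (ht : c + t * d ≠ 0) :
    HasDerivAt (fun t : ℝ => K / (c + t * d) ^ n) (-(n * K * d) / (c + t * d) ^ (n + 1)) t := by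
  have hpow := (hasDerivAt_affine c d t).fun_pow n
  refine ((hasDerivAt_const t K).div hpow (pow_ne_zero n ht)).congr_deriv ?_
  rcases n with _ | n
  · simp
  · simp only [Nat.add_sub_cancel]
    field_simp
    ring

theorem deriv_deriv_affine_div_affine (hc : c ≠ 0) :
    deriv (deriv fun t : ℝ => (a + t * b) / (c + t * d)) 0 = -2 * d * (b * c - a * d) / c ^ 3 := by
  refine deriv_deriv_eq_of_eventually_hasDerivAt
    ((eventually_affine_ne_zero c d hc).mono fun t ht => hasDerivAt_affine_div_affine a b c d ht) ?_
  refine (hasDerivAt_const_div_affine_pow c d (b * c - a * d) 2 (t := 0)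
    (by simpa using hc)).congr_deriv ?_
  push_cast
  simp only [zero_mul, add_zero]
  ring

theorem hasDerivAt_quadratic (s r : ℂ) (t : ℝ) :
    HasDerivAt (fun t : ℝ => s + 2 * t * r + t ^ 2) (2 * r + 2 * t) t := by
  have h := (hasDerivAt_id t).ofReal_comp
  simpa using (h.const_mul 2 |>.mul_const r |>.const_add s).fun_add (h.fun_pow 2)

theorem deriv_deriv_quadratic_mul_const_div_affine_sq (s r K : ℂ) (hc : c ≠ 0) :
    deriv (deriv fun t : ℝ => (s + 2 * t * r + t ^ 2) * (K / (c + t * d) ^ 2)) 0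
      = 2 * K / c ^ 2 - 8 * r * d * K / c ^ 3 + 6 * s * d ^ 2 * K / c ^ 4 := by
  have hc0 : c + ((0 : ℝ) : ℂ) * d ≠ 0 := by simpa using hc
  refine deriv_deriv_eq_of_eventually_hasDerivAt ((eventually_affine_ne_zero c d hc).mono
    fun t ht => (hasDerivAt_quadratic s r t).mul (hasDerivAt_const_div_affine_pow c d K 2 ht)) ?_
  have hlin : HasDerivAt (fun t : ℝ => 2 * r + 2 * t) 2 0 := by
    simpa [mul_comm] using hasDerivAt_affine (2 * r) 2 0
  have h3 := hasDerivAt_const_div_affine_pow c d (-((2 : ℕ) * K * d)) (2 + 1) hc0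
  refine ((hlin.fun_mul (hasDerivAt_const_div_affine_pow c d K 2 hc0)).fun_add
    ((hasDerivAt_quadratic s r 0).fun_mul h3)).congr_deriv ?_
  push_cast
  simp only [zero_mul, add_zero, mul_zero]
  field_simp
  ring

end Affine

section Lines

variable {ι : Type*} [Fintype ι] [DecidableEq ι]

theorem sum_mul_add_smul_single (v : ι → ℂ) (x : ι → ℝ) (i : ι) (t : ℝ) :
    ∑ j, v j * ((x + t • (Pi.single i 1 : ι → ℝ)) j : ℂ) = ∑ j, v j * (x j : ℂ) + t * v i := by
  simp [mul_add, Finset.sum_add_distrib, Pi.single_apply, apply_ite Complex.ofReal, mul_comm]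

theorem sum_sq_add_smul_single (x : ι → ℝ) (i : ι) (t : ℝ) :
    ∑ j, (x + t • (Pi.single i 1 : ι → ℝ)) j ^ 2 = ∑ j, x j ^ 2 + 2 * t * x i + t ^ 2 := by
  simp [add_sq, Finset.sum_add_distrib, Pi.single_apply]
  ring

end Lines

theorem lap4_congr {f g : (Fin 4 → ℝ) → ℂ} {x : Fin 4 → ℝ} (h : f =ᶠ[𝓝 x] g) :
    lap4 f x = lap4 g x := by
  refine Finset.sum_congr rfl fun i _ => ?_
  have hline : Tendsto (fun t : ℝ => x + t • (Pi.single i 1 : Fin 4 → ℝ)) (𝓝 0) (𝓝 x) := by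
    simpa using (tendsto_const_nhds (x := x)).add
      ((continuous_id.smul continuous_const).tendsto' (0 : ℝ) 0 (by simp))
  have hg : (fun t : ℝ => f (x + t • (Pi.single i 1 : Fin 4 → ℝ)))
      =ᶠ[𝓝 0] fun t => g (x + t • (Pi.single i 1 : Fin 4 → ℝ)) := hline.eventually h
  exact hg.deriv.deriv_eq

theorem lap4_linear_div_linear (p q : Fin 4 → ℂ) (hq : ∑ i, q i * q i = 0) {x : Fin 4 → ℝ}
    (hx : ∑ i, q i * (x i : ℂ) ≠ 0) :
    lap4 (fun y => (∑ i, p i * (y i : ℂ)) / ∑ i, q i * (y i : ℂ)) x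
      = -2 * (∑ i, p i * q i) / (∑ i, q i * (x i : ℂ)) ^ 2 := by
  set L := ∑ i, p i * (x i : ℂ)
  set M := ∑ i, q i * (x i : ℂ)
  calc lap4 _ x = ∑ i, -2 * q i * (p i * M - L * q i) / M ^ 3 := by
        refine Finset.sum_congr rfl fun i _ => ?_
        simp only [sum_mul_add_smul_single]
        exact deriv_deriv_affine_div_affine L (p i) M (q i) hx
    _ = -2 * (∑ i, p i * q i) / M ^ 2 + 2 * L / M ^ 3 * ∑ i, q i * q i := by
        simp only [Finset.mul_sum, Finset.sum_div, ← Finset.sum_add_distrib]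
        refine Finset.sum_congr rfl fun i _ => ?_
        field_simp
        ring
    _ = -2 * (∑ i, p i * q i) / M ^ 2 := by rw [hq, mul_zero, add_zero]

theorem lap4_sq_norm_mul_const_div_linear_sq (K : ℂ) (q : Fin 4 → ℂ) (hq : ∑ i, q i * q i = 0)
    {x : Fin 4 → ℝ} (hx : ∑ i, q i * (x i : ℂ) ≠ 0) :
    lap4 (fun y => ((∑ i, y i ^ 2 : ℝ) : ℂ) * (K / (∑ i, q i * (y i : ℂ)) ^ 2)) x = 0 := by
  set s := ∑ i, x i ^ 2
  set M := ∑ i, q i * (x i : ℂ)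
  calc lap4 _ x = ∑ i : Fin 4,
        (2 * K / M ^ 2 - 8 * x i * q i * K / M ^ 3 + 6 * s * q i ^ 2 * K / M ^ 4) := by
        refine Finset.sum_congr rfl fun i _ => ?_
        simp only [sum_mul_add_smul_single, sum_sq_add_smul_single, Complex.ofReal_add,
          Complex.ofReal_mul, Complex.ofReal_pow, Complex.ofReal_ofNat]
        exact deriv_deriv_quadratic_mul_const_div_affine_sq M (q i) s (x i) K hx
    _ = 4 * (2 * K / M ^ 2) - 8 * K / M ^ 3 * M + 6 * s * K / M ^ 4 * ∑ i, q i * q i := by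
        simp only [Finset.sum_add_distrib, Finset.sum_sub_distrib, Finset.sum_const,
          Finset.card_univ, Fintype.card_fin, Finset.mul_sum, M]
        congr 1
        · congr 1
          · norm_num
          · exact Finset.sum_congr rfl fun i _ => by ring
        · exact Finset.sum_congr rfl fun i _ => by ring
    _ = 0 := by
        rw [hq]
        field_simp
        ring

theorem biharmonic_R4_general (p q : Fin 4 → ℂ) (hq : (∑ i, q i * q i) = 0) :
    ∀ x : Fin 4 → ℝ, (∑ i, q i * (x i : ℂ)) ≠ 0 →
      (lap4 (fun y => (∑ i, p i * (y i : ℂ)) / (∑ i, q i * (y i : ℂ))) x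
          = -2 * (∑ i, p i * q i) / (∑ i, q i * (x i : ℂ)) ^ 2
        ∧ lap4 (fun y => ((∑ i, (y i) ^ 2 : ℝ) : ℂ)
            * lap4 (fun w => (∑ i, p i * (w i : ℂ)) / (∑ i, q i * (w i : ℂ))) y) x = 0
        ∧ ((∑ i, p i * q i) ≠ 0 →
            lap4 (fun y => (∑ i, p i * (y i : ℂ)) / (∑ i, q i * (y i : ℂ))) x ≠ 0)) := by
  intro x hx
  refine ⟨lap4_linear_div_linear p q hq hx, ?_, fun hpq => ?_⟩
  · have hcont : Continuous fun y : Fin 4 → ℝ => ∑ i, q i * (y i : ℂ) := by fun_prop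
    have hV : ∀ᶠ y in 𝓝 x, ∑ i, q i * (y i : ℂ) ≠ 0 := hcont.continuousAt.eventually_ne hx
    rw [lap4_congr (hV.mono fun y hy => by rw [lap4_linear_div_linear p q hq hy])]
    exact lap4_sq_norm_mul_const_div_linear_sq _ q hq hx
  · rw [lap4_linear_div_linear p q hq hx]
    exact div_ne_zero (mul_ne_zero (by norm_num) hpq) (pow_ne_zero 2 hx)

/-- let `p, q ∈ ℂ⁴` be linearly independent with `(q,q) = 0`, and let
`f̂(x) = (Σ p_i x_i)/(Σ q_i x_i)` on `V = {x : Σ q_i x_i ≠ 0}`. Then on `V`: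
(i) `Δf̂ = −2(p,q)/(Σ q_i x_i)²`, (ii) `Δ(|x|²·Δf̂) = 0`, and in particular if
`(p,q) ≠ 0` then `Δf̂` does not vanish on `V`. -/
theorem biharmonic_R4 (p q : Fin 4 → ℂ) (hpq : LinearIndependent ℂ ![p, q])
    (hq : (∑ i, q i * q i) = 0) :
    ∀ x : Fin 4 → ℝ, (∑ i, q i * (x i : ℂ)) ≠ 0 →
      (lap4 (fun y => (∑ i, p i * (y i : ℂ)) / (∑ i, q i * (y i : ℂ))) x
          = -2 * (∑ i, p i * q i) / (∑ i, q i * (x i : ℂ)) ^ 2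
        ∧ lap4 (fun y => ((∑ i, (y i) ^ 2 : ℝ) : ℂ)
            * lap4 (fun w => (∑ i, p i * (w i : ℂ)) / (∑ i, q i * (w i : ℂ))) y) x = 0
        ∧ ((∑ i, p i * q i) ≠ 0 →
            lap4 (fun y => (∑ i, p i * (y i : ℂ)) / (∑ i, q i * (y i : ℂ))) x ≠ 0)) :=
  biharmonic_R4_general p q hq

end
end

section
/- Let p, q ∈ ℂ⁴ be linearly independent with (q,q)_L = 0, where (u,v)_L = −u₀v₀ + u₁v₁ + u₂v₂ + u₃v₃ is the complex-bilinear Lorentzian pairing. Define f̂ on the open set V = {x ∈ ℝ⁴ : q₀x₀ + q₁x₁ + q₂x₂ + q₃x₃ ≠ 0} by f̂(x) = (p₀x₀ + p₁x₁ + p₂x₂ + p₃x₃)/(q₀x₀ + q₁x₁ + q₂x₂ + q₃x₃). Then for all x ∈ V: (i) □f̂(x) = −2(p,q)_L/(q₀x₀ + … + q₃x₃)², and (ii) □(x ↦ (−x₀² + x₁² + x₂² + x₃²) · □f̂(x)) = 0 on V. In particular, if (p,q)_L ≠ 0 then □f̂ does not vanish on V. -/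
noncomputable section

/-- The Lorentzian signs `ε₀ = −1`, `ε₁ = ε₂ = ε₃ = 1`. -/
def lsign (i : Fin 4) : ℂ := if i = 0 then -1 else 1

/-- The d'Alembert wave operator on `ℝ⁴` (coordinates `x₀, x₁, x₂, x₃`), applied to
complex-valued functions: `□f = −∂²f/∂x₀² + ∂²f/∂x₁² + ∂²f/∂x₂² + ∂²f/∂x₃²`, where the
second partials are computed as second derivatives along the coordinate directions. -/
def boxOp (f : (Fin 4 → ℝ) → ℂ) (x : Fin 4 → ℝ) : ℂ :=
  ∑ i : Fin 4, lsign i * deriv (deriv (fun t : ℝ => f (x + t • (Pi.single i 1 : Fin 4 → ℝ)))) 0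

/-!
Restricted to a coordinate line `t ↦ x + t eᵢ`, each function involved is a quadratic polynomial
in `t` divided by a power of the linear function `Q(x) + qᵢ t`, whose second derivative at `0` is
explicit. Summing with the Lorentzian signs gives, with `P = Σ pᵢxᵢ`, `Q = Σ qᵢxᵢ` and
`S = −x₀² + x₁² + x₂² + x₃²`,
  `□(P/Q) = −2(p,q)_L/Q² + 2P(q,q)_L/Q³`  and  `□(S·c/Q²) = 6cS(q,q)_L/Q⁴`,
the terms without `(q,q)_L` in the second formula cancelling because `Σ εᵢ² = 4` and
`Σ qᵢxᵢ = Q`. Both corrections vanish for null `q`. In (ii), `□f̂` may be replaced by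
`−2(p,q)_L/Q²` since `□` only sees a function near the point and `V` is open.
-/

open Filter Topology

lemma HasDerivAt.div_linear_pow {N : ℝ → ℂ} {n' C D : ℂ} {t : ℝ} (hN : HasDerivAt N n' t)
    (k : ℕ) (ht : C + D * t ≠ 0) :
    HasDerivAt (fun s : ℝ => N s / (C + D * s) ^ k)
      (n' / (C + D * t) ^ k - k * D * N t / (C + D * t) ^ (k + 1)) t := by
  have hL : HasDerivAt (fun s : ℝ => C + D * (s : ℂ)) D t := by
    simpa using ((hasDerivAt_id t).ofReal_comp.const_mul D).const_add C
  refine (hN.fun_div (hL.fun_pow k) (pow_ne_zero k ht)).congr_deriv ?_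
  rcases k with _ | k
  · simp
  · rw [Nat.add_sub_cancel]
    field_simp
    push_cast
    ring

lemma deriv_deriv_quadratic_div_linear_pow (a₀ a₁ a₂ C D : ℂ) (k : ℕ) (hC : C ≠ 0) :
    deriv (deriv fun t : ℝ => (a₀ + a₁ * t + a₂ * t ^ 2) / (C + D * t) ^ k) 0
      = 2 * a₂ / C ^ k - 2 * k * a₁ * D / C ^ (k + 1)
        + k * (k + 1) * a₀ * D ^ 2 / C ^ (k + 2) := by
  have hN : ∀ t : ℝ, HasDerivAt (fun s : ℝ => a₀ + a₁ * s + a₂ * (s : ℂ) ^ 2)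
      (a₁ + 2 * a₂ * t) t := by
    intro t
    refine ((((hasDerivAt_id t).ofReal_comp.const_mul a₁).const_add a₀).fun_add
      (((hasDerivAt_id t).ofReal_comp.fun_pow 2).const_mul a₂)).congr_deriv ?_
    simp only [Complex.ofReal_one, id_eq]
    ring
  have hN' : HasDerivAt (fun s : ℝ => a₁ + 2 * a₂ * (s : ℂ)) (2 * a₂) 0 := by
    simpa using ((hasDerivAt_id (0 : ℝ)).ofReal_comp.const_mul (2 * a₂)).const_add a₁
  have hL : ∀ᶠ t : ℝ in 𝓝 0, C + D * (t : ℂ) ≠ 0 :=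
    (show ContinuousAt (fun t : ℝ => C + D * (t : ℂ)) 0 by fun_prop).eventually_ne (by simpa)
  have hfirst : deriv (fun t : ℝ => (a₀ + a₁ * t + a₂ * t ^ 2) / (C + D * t) ^ k)
      =ᶠ[𝓝 0] fun t : ℝ => (a₁ + 2 * a₂ * t) / (C + D * t) ^ k
        - k * D * ((a₀ + a₁ * t + a₂ * t ^ 2) / (C + D * t) ^ (k + 1)) := by
    filter_upwards [hL] with t ht
    rw [((hN t).div_linear_pow k ht).deriv, mul_div_assoc]
  have hC0 : C + D * ((0 : ℝ) : ℂ) ≠ 0 := by simpa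
  rw [hfirst.deriv_eq, ((hN'.div_linear_pow k hC0).fun_sub
    (((hN 0).div_linear_pow (k + 1) hC0).const_mul (k * D))).deriv]
  field_simp
  push_cast
  ring

def linForm (c : Fin 4 → ℂ) (x : Fin 4 → ℝ) : ℂ := ∑ i, c i * (x i : ℂ)

def minkowskiQuad (x : Fin 4 → ℝ) : ℂ := ∑ i, lsign i * (x i : ℂ) ^ 2

def lorentzPairing (u v : Fin 4 → ℂ) : ℂ := ∑ i, lsign i * u i * v i

lemma lsign_mul_self (i : Fin 4) : lsign i * lsign i = 1 := by
  unfold lsign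
  split_ifs <;> norm_num

lemma continuous_linForm (c : Fin 4 → ℂ) : Continuous (linForm c) := by
  unfold linForm
  fun_prop

lemma linForm_add_smul_single (c : Fin 4 → ℂ) (x : Fin 4 → ℝ) (i : Fin 4) (t : ℝ) :
    linForm c (x + t • Pi.single i 1) = linForm c x + c i * t := by
  have h : ∀ j, c j * ((x + t • (Pi.single i 1 : Fin 4 → ℝ)) j : ℂ)
      = c j * x j + if j = i then c i * t else 0 := by
    intro j
    by_cases hji : j = i
    · subst hji
      simp only [Pi.add_apply, Pi.smul_apply, Pi.single_eq_same, smul_eq_mul, mul_one,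
        Complex.ofReal_add, if_true]
      ring
    · simp [hji]
  simp only [linForm, h, Finset.sum_add_distrib, Finset.sum_ite_eq', Finset.mem_univ, if_true]

lemma minkowskiQuad_add_smul_single (x : Fin 4 → ℝ) (i : Fin 4) (t : ℝ) :
    minkowskiQuad (x + t • Pi.single i 1)
      = minkowskiQuad x + 2 * lsign i * x i * t + lsign i * t ^ 2 := by
  have h : ∀ j, lsign j * ((x + t • (Pi.single i 1 : Fin 4 → ℝ)) j : ℂ) ^ 2
      = lsign j * (x j : ℂ) ^ 2
        + if j = i then 2 * lsign i * x i * t + lsign i * (t : ℂ) ^ 2 else 0 := by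
    intro j
    by_cases hji : j = i
    · subst hji
      simp only [Pi.add_apply, Pi.smul_apply, Pi.single_eq_same, smul_eq_mul, mul_one,
        Complex.ofReal_add, if_true]
      ring
    · simp [hji]
  simp only [minkowskiQuad, h, Finset.sum_add_distrib, Finset.sum_ite_eq', Finset.mem_univ,
    if_true, add_assoc]

lemma boxOp_congr {f g : (Fin 4 → ℝ) → ℂ} {x : Fin 4 → ℝ} (h : f =ᶠ[𝓝 x] g) :
    boxOp f x = boxOp g x := by
  refine Finset.sum_congr rfl fun i _ => ?_
  have hline : Tendsto (fun t : ℝ => x + t • (Pi.single i 1 : Fin 4 → ℝ)) (𝓝 0) (𝓝 x) := by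
    simpa using (show Continuous fun t : ℝ => x + t • (Pi.single i 1 : Fin 4 → ℝ) by
      fun_prop).tendsto 0
  have hf : (fun t : ℝ => f (x + t • Pi.single i 1)) =ᶠ[𝓝 0]
      fun t : ℝ => g (x + t • Pi.single i 1) := hline.eventually h
  rw [hf.deriv.deriv_eq]

lemma boxOp_linForm_div (p q : Fin 4 → ℂ) {x : Fin 4 → ℝ} (hx : linForm q x ≠ 0) :
    boxOp (fun y => linForm p y / linForm q y) x
      = -2 * lorentzPairing p q / linForm q x ^ 2
        + 2 * linForm p x * lorentzPairing q q / linForm q x ^ 3 := by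
  have hline : ∀ i, deriv (deriv fun t : ℝ =>
      linForm p (x + t • Pi.single i 1) / linForm q (x + t • Pi.single i 1)) 0
      = -2 * p i * q i / linForm q x ^ 2 + 2 * linForm p x * q i * q i / linForm q x ^ 3 := by
    intro i
    simp only [linForm_add_smul_single]
    have := deriv_deriv_quadratic_div_linear_pow (linForm p x) (p i) 0 (linForm q x) (q i) 1 hx
    simp only [zero_mul, add_zero, pow_one] at this
    rw [this]
    field_simp
    ring
  simp only [boxOp, hline, lorentzPairing, Finset.sum_div, Finset.mul_sum, ← Finset.sum_add_distrib]
  refine Finset.sum_congr rfl fun i _ => ?_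
  ring

lemma boxOp_minkowskiQuad_mul_div_sq (c : ℂ) (q : Fin 4 → ℂ) {x : Fin 4 → ℝ}
    (hx : linForm q x ≠ 0) :
    boxOp (fun y => minkowskiQuad y * (c / linForm q y ^ 2)) x
      = 6 * c * minkowskiQuad x * lorentzPairing q q / linForm q x ^ 4 := by
  have hline : ∀ i, lsign i * deriv (deriv fun t : ℝ => minkowskiQuad (x + t • Pi.single i 1)
      * (c / linForm q (x + t • Pi.single i 1) ^ 2)) 0
      = 2 * c / linForm q x ^ 2 - 8 * c / linForm q x ^ 3 * (q i * x i)
        + 6 * c * minkowskiQuad x / linForm q x ^ 4 * (lsign i * q i * q i) := by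
    intro i
    have hfun : (fun t : ℝ => minkowskiQuad (x + t • Pi.single i 1)
        * (c / linForm q (x + t • Pi.single i 1) ^ 2)) = fun t : ℝ =>
        (c * minkowskiQuad x + c * (2 * lsign i * x i) * t + c * lsign i * t ^ 2)
          / (linForm q x + q i * t) ^ 2 := by
      funext t
      rw [minkowskiQuad_add_smul_single, linForm_add_smul_single]
      ring
    rw [hfun, deriv_deriv_quadratic_div_linear_pow _ _ _ _ _ 2 hx]
    linear_combination (2 * c / linForm q x ^ 2 - 8 * c / linForm q x ^ 3 * (q i * x i))
      * lsign_mul_self i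
  simp only [boxOp, hline, Finset.sum_add_distrib, Finset.sum_sub_distrib, ← Finset.mul_sum,
    Finset.sum_const, Finset.card_univ, Fintype.card_fin, nsmul_eq_mul]
  rw [show ∑ i, q i * (x i : ℂ) = linForm q x from rfl,
    show ∑ i, lsign i * q i * q i = lorentzPairing q q from rfl]
  field_simp
  ring

theorem biharmonic_Minkowski_general (p q : Fin 4 → ℂ)
    (hq : (∑ i, lsign i * q i * q i) = 0) :
    ∀ x : Fin 4 → ℝ, (∑ i, q i * (x i : ℂ)) ≠ 0 →
      (boxOp (fun y => (∑ i, p i * (y i : ℂ)) / (∑ i, q i * (y i : ℂ))) x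
          = -2 * (∑ i, lsign i * p i * q i) / (∑ i, q i * (x i : ℂ)) ^ 2
        ∧ boxOp (fun y => (∑ i, lsign i * ((y i : ℂ)) ^ 2)
            * boxOp (fun w => (∑ i, p i * (w i : ℂ)) / (∑ i, q i * (w i : ℂ))) y) x = 0
        ∧ ((∑ i, lsign i * p i * q i) ≠ 0 →
            boxOp (fun y => (∑ i, p i * (y i : ℂ)) / (∑ i, q i * (y i : ℂ))) x ≠ 0)) := by
  have hqq : lorentzPairing q q = 0 := hq
  have hbox : ∀ y, linForm q y ≠ 0 → boxOp (fun w => linForm p w / linForm q w) y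
      = -2 * lorentzPairing p q / linForm q y ^ 2 := by
    intro y hy
    rw [boxOp_linForm_div p q hy, hqq, mul_zero, zero_div, add_zero]
  intro x hx
  refine ⟨hbox x hx, ?_, fun hpq => ?_⟩
  · have hV : ∀ᶠ y in 𝓝 x, linForm q y ≠ 0 := (continuous_linForm q).continuousAt.eventually_ne hx
    change boxOp (fun y => minkowskiQuad y * boxOp (fun w => linForm p w / linForm q w) y) x = 0
    rw [boxOp_congr (hV.mono fun y hy => by rw [hbox y hy]),
      boxOp_minkowskiQuad_mul_div_sq _ q hx, hqq, mul_zero, zero_div]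
  · change boxOp (fun w => linForm p w / linForm q w) x ≠ 0
    rw [hbox x hx]
    exact div_ne_zero (mul_ne_zero (by norm_num) hpq) (pow_ne_zero 2 hx)

/-- let `p, q ∈ ℂ⁴` be linearly independent with `(q,q)_L = 0` for the
Lorentzian pairing `(u,v)_L = −u₀v₀ + u₁v₁ + u₂v₂ + u₃v₃`, and let
`f̂(x) = (Σ p_i x_i)/(Σ q_i x_i)` on `V = {x : Σ q_i x_i ≠ 0}`. Then on `V`:
(i) `□f̂ = −2(p,q)_L/(Σ q_i x_i)²`, (ii) `□((−x₀²+x₁²+x₂²+x₃²)·□f̂) = 0`, and in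
particular if `(p,q)_L ≠ 0` then `□f̂` does not vanish on `V`. -/
theorem biharmonic_Minkowski (p q : Fin 4 → ℂ) (hpq : LinearIndependent ℂ ![p, q])
    (hq : (∑ i, lsign i * q i * q i) = 0) :
    ∀ x : Fin 4 → ℝ, (∑ i, q i * (x i : ℂ)) ≠ 0 →
      (boxOp (fun y => (∑ i, p i * (y i : ℂ)) / (∑ i, q i * (y i : ℂ))) x
          = -2 * (∑ i, lsign i * p i * q i) / (∑ i, q i * (x i : ℂ)) ^ 2
        ∧ boxOp (fun y => (∑ i, lsign i * ((y i : ℂ)) ^ 2)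
            * boxOp (fun w => (∑ i, p i * (w i : ℂ)) / (∑ i, q i * (w i : ℂ))) y) x = 0
        ∧ ((∑ i, lsign i * p i * q i) ≠ 0 →
            boxOp (fun y => (∑ i, p i * (y i : ℂ)) / (∑ i, q i * (y i : ℂ))) x ≠ 0)) :=
  biharmonic_Minkowski_general p q hq

end
end

section
/- Let n ≥ 1 and 1 ≤ j, α ≤ n, and let z_{jα} : ℂ^{n×n} → ℂ be the matrix coefficient function z ↦ z_{jα}. Then on U(n) one has τ(z_{jα}) = −n · z_{jα}, i.e. for every p ∈ U(n), Σ_{Z ∈ B} (d²/ds²)|_{s=0} (p · exp(sZ))_{jα} = −n · p_{jα}. -/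
open Matrix

noncomputable section

/-! For a `ℂ`-linear functional `f` on matrices, `s ↦ f (p * exp (s • Z))` has second derivative
`f (p * Z²)` at `0`, so `τ(f)(p) = f (p * C)` with `C = Σ_{Z ∈ B} Z²` the Casimir element of `u(n)`.
Since `Y_{rs}² + (iX_{rs})² = -E_{rr} - E_{ss}` and `(iE_{tt})² = -E_{tt}`, every diagonal unit
`E_{tt}` occurs `n` times in `C` with coefficient `-1`, so `C = -n • 1` and `τ(f)(p) = -n f(p)`. -/

open NormedSpace

section ExpDeriv

variable {𝔸 E : Type*} [NormedRing 𝔸] [NormedAlgebra ℝ 𝔸] [CompleteSpace 𝔸]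
  [NormedAddCommGroup E] [NormedSpace ℝ E]

theorem hasDerivAt_clm_mul_exp_smul_mul (L : 𝔸 →L[ℝ] E) (p Z Q : 𝔸) (s : ℝ) :
    HasDerivAt (fun u : ℝ => L (p * exp (u • Z) * Q)) (L (p * exp (s • Z) * (Z * Q))) s := by
  have h := ((hasDerivAt_exp_smul_const Z s).const_mul p).mul_const Q
  simpa only [mul_assoc, Function.comp_def] using L.hasFDerivAt.comp_hasDerivAt s h

theorem deriv_deriv_clm_mul_exp_smul_zero (L : 𝔸 →L[ℝ] E) (p Z : 𝔸) :
    deriv (deriv fun s : ℝ => L (p * exp (s • Z))) 0 = L (p * (Z * Z)) := by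
  have hfirst : deriv (fun s : ℝ => L (p * exp (s • Z))) = fun s => L (p * exp (s • Z) * Z) := by
    funext s
    simpa only [mul_one] using (hasDerivAt_clm_mul_exp_smul_mul L p Z 1 s).deriv
  rw [hfirst]
  simpa only [mul_one, zero_smul, exp_zero] using (hasDerivAt_clm_mul_exp_smul_mul L p Z Z 0).deriv

end ExpDeriv

theorem Finset.sum_sum_ite_lt_add_add_sum {ι M : Type*} [Fintype ι] [LinearOrder ι]
    [AddCommMonoid M] (f : ι → M) :
    ∑ r, ∑ s, (if r < s then f r + f s else 0) + ∑ t, f t = Fintype.card ι • ∑ t, f t := by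
  have hswap : ∑ r, ∑ s, (if r < s then f s else 0) = ∑ r, ∑ s, (if s < r then f r else 0) :=
    Finset.sum_comm
  have hdiag : ∑ t, f t = ∑ r, ∑ s, (if r = s then f r else 0) := by simp
  have htri : ∀ r s : ι,
      (if r < s then f r else 0) + (if s < r then f r else 0) + (if r = s then f r else 0)
        = f r := by
    intro r s
    rcases lt_trichotomy r s with h | rfl | h
    · simp [h, h.ne, h.not_gt]
    · simp
    · simp [h, h.ne', h.not_gt]
  conv_lhs => rw [hdiag]
  simp only [ite_add_zero, Finset.sum_add_distrib]
  rw [hswap]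
  simp only [← Finset.sum_add_distrib, htri, Finset.sum_const, Finset.card_univ, Finset.smul_sum]

-- Any norm will do: it only serves to differentiate `exp`, whose topology is the entrywise one.
attribute [local instance] Matrix.linftyOpNormedRing Matrix.linftyOpNormedAlgebra

theorem lieD2_linearMap {n : ℕ} (f : Matrix (Fin n) (Fin n) ℂ →ₗ[ℂ] ℂ)
    (p Z : Matrix (Fin n) (Fin n) ℂ) : lieD2 f p Z = f (p * (Z * Z)) := by
  have hsmul : ∀ s : ℝ, (s : ℂ) • Z = s • Z := fun s => algebraMap_smul ℂ s Z
  simp only [lieD2, hsmul]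
  exact deriv_deriv_clm_mul_exp_smul_zero (f.restrictScalars ℝ).toContinuousLinearMap p Z

def casimirU (n : ℕ) : Matrix (Fin n) (Fin n) ℂ :=
  (∑ r : Fin n, ∑ s : Fin n, if r < s then
      matY n r s * matY n r s + (Complex.I • matX n r s) * (Complex.I • matX n r s) else 0)
  + ∑ t : Fin n, (Complex.I • matE n t t) * (Complex.I • matE n t t)

theorem tauU_linearMap_eq_apply_mul_casimirU {n : ℕ} (f : Matrix (Fin n) (Fin n) ℂ →ₗ[ℂ] ℂ)
    (p : Matrix (Fin n) (Fin n) ℂ) : tauU n f p = f (p * casimirU n) := by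
  simp only [tauU, casimirU, lieD2_linearMap, mul_add, Finset.mul_sum, mul_ite, mul_zero,
    map_add, map_sum, apply_ite f, map_zero]

theorem matY_mul_self_add_I_smul_matX_mul_self {n : ℕ} {r s : Fin n} (h : r ≠ s) :
    matY n r s * matY n r s + (Complex.I • matX n r s) * (Complex.I • matX n r s)
      = -matE n r r + -matE n s s := by
  have hsq : (Real.sqrt 2 : ℂ)⁻¹ * (Real.sqrt 2 : ℂ)⁻¹ = 2⁻¹ := by
    rw [← mul_inv, ← Complex.ofReal_mul, Real.mul_self_sqrt zero_le_two, Complex.ofReal_ofNat]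
  have hY : (matE n r s - matE n s r) * (matE n r s - matE n s r) = -matE n r r - matE n s s := by
    simp only [matE, sub_mul, mul_sub, Matrix.single_mul_single_of_ne _ _ _ _ h.symm,
      Matrix.single_mul_single_of_ne _ _ _ _ h, Matrix.single_mul_single_same, one_mul]
    abel
  have hX : (matE n r s + matE n s r) * (matE n r s + matE n s r) = matE n r r + matE n s s := by
    simp only [matE, add_mul, mul_add, Matrix.single_mul_single_of_ne _ _ _ _ h.symm,
      Matrix.single_mul_single_of_ne _ _ _ _ h, Matrix.single_mul_single_same, one_mul]
    abel
  simp only [matY, matX, smul_mul_smul_comm, hY, hX, hsq, Complex.I_mul_I]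
  module

theorem I_smul_matE_mul_self (n : ℕ) (t : Fin n) :
    (Complex.I • matE n t t) * (Complex.I • matE n t t) = -matE n t t := by
  rw [smul_mul_smul_comm, Complex.I_mul_I, matE, Matrix.single_mul_single_same, one_mul,
    neg_one_smul]

theorem casimirU_eq (n : ℕ) : casimirU n = -(n : ℂ) • 1 := by
  have hpair : ∀ r s : Fin n, (if r < s then
      matY n r s * matY n r s + (Complex.I • matX n r s) * (Complex.I • matX n r s) else 0)
      = if r < s then -matE n r r + -matE n s s else 0 := by
    intro r s
    split_ifs with h
    exacts [matY_mul_self_add_I_smul_matX_mul_self h.ne, rfl]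
  have hone : ∑ t : Fin n, matE n t t = 1 := by
    rw [← Matrix.diagonal_one, ← Matrix.sum_single_eq_diagonal]
    rfl
  rw [casimirU]
  simp only [hpair, I_smul_matE_mul_self]
  refine (Finset.sum_sum_ite_lt_add_add_sum fun t => -matE n t t).trans ?_
  rw [Fintype.card_fin, Finset.sum_neg_distrib, hone, ← Nat.cast_smul_eq_nsmul ℂ, smul_neg,
    neg_smul]

theorem tauU_linearMap {n : ℕ} (f : Matrix (Fin n) (Fin n) ℂ →ₗ[ℂ] ℂ)
    (p : Matrix (Fin n) (Fin n) ℂ) : tauU n f p = -(n : ℂ) * f p := by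
  rw [tauU_linearMap_eq_apply_mul_casimirU, casimirU_eq, Matrix.mul_smul, Matrix.mul_one,
    map_smul, smul_eq_mul]

theorem tau_coeff_unitary_general (n : ℕ) (j α : Fin n) (p : Matrix (Fin n) (Fin n) ℂ) :
    tauU n (fun z => z j α) p = -(n : ℂ) * p j α :=
  tauU_linearMap (Matrix.entryLinearMap ℂ ℂ j α) p

/-- on `U(n)` one has `τ(z_{jα}) = −n·z_{jα}`. -/
theorem tau_coeff_unitary (n : ℕ) (hn : 1 ≤ n) (j α : Fin n)
    (p : Matrix (Fin n) (Fin n) ℂ) (hp : p ∈ Matrix.unitaryGroup (Fin n) ℂ) :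
    tauU n (fun z => z j α) p = -(n : ℂ) * p j α :=
  tau_coeff_unitary_general n j α p
end
end

section
/- Let n ≥ 1 and 1 ≤ j, k, α, β ≤ n, and let z_{jα}, z_{kβ} : ℂ^{n×n} → ℂ be the corresponding matrix coefficient functions. Then on U(n) the conformality operator satisfies κ(z_{jα}, z_{kβ}) = −z_{kα} z_{jβ}, i.e. for every p ∈ U(n), Σ_{Z ∈ B} ((d/ds)|_{s=0} (p·exp(sZ))_{jα}) · ((d/ds)|_{s=0} (p·exp(sZ))_{kβ}) = −p_{kα} p_{jβ}. -/
open Matrix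

noncomputable section

/-!
Along `s ↦ p·exp(sZ)` the coefficient `z_{jα}` has derivative `(pZ)_{jα} = (p_j Z)_α` at `s = 0`,
where `p_j` is the `j`-th row of `p`, so `κ(z_{jα}, z_{kβ})(p) = Σ_{Z ∈ B} (p_j Z)_α (p_k Z)_β`.
For the basis `B` one has the Casimir identity `Σ_{Z ∈ B} (uZ)_c (vZ)_d = -u_d v_c` for all row
vectors `u, v`: the pair `Y_{rs}, iX_{rs}` contributes `-(u_s v_r [c = r, d = s] + u_r v_s [c = s, d = r])`
and `iE_{tt}` contributes `-u_t v_t [c = d = t]`.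
-/

theorem hasDerivAt_mul_exp_real_smul {𝔸 : Type*} [NormedRing 𝔸] [NormedAlgebra ℂ 𝔸]
    [CompleteSpace 𝔸] (p Z : 𝔸) :
    HasDerivAt (fun s : ℝ => p * NormedSpace.exp ((s : ℂ) • Z)) (p * Z) 0 := by
  let _ : NormedAlgebra ℝ 𝔸 := NormedAlgebra.restrictScalars ℝ ℂ 𝔸
  simpa [Complex.coe_smul] using (hasDerivAt_exp_smul_const (𝕂 := ℝ) Z 0).const_mul p

attribute [local instance] Matrix.linftyOpNormedRing Matrix.linftyOpNormedAlgebra in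
theorem lieD1_entry {n : ℕ} (j α : Fin n) (p Z : Matrix (Fin n) (Fin n) ℂ) :
    lieD1 (fun z => z j α) p Z = (p * Z) j α :=
  (hasDerivAt_pi.1 (hasDerivAt_pi.1 (hasDerivAt_mul_exp_real_smul p Z) j) α).deriv

open Complex in
def basisSumU (n : ℕ) (F : Matrix (Fin n) (Fin n) ℂ → ℂ) : ℂ :=
  (∑ r : Fin n, ∑ s : Fin n, if r < s then F (matY n r s) + F (I • matX n r s) else 0)
    + ∑ t : Fin n, F (I • matE n t t)

theorem kappaU_eq_basisSumU (n : ℕ) (f h : Matrix (Fin n) (Fin n) ℂ → ℂ)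
    (p : Matrix (Fin n) (Fin n) ℂ) :
    kappaU n f h p = basisSumU n (fun Z => lieD1 f p Z * lieD1 h p Z) :=
  rfl

section

variable {n : ℕ} (u v : Fin n → ℂ)

theorem vecMul_matE_apply (r s c : Fin n) :
    (u ᵥ* matE n r s) c = if c = s then u r else 0 := by
  simp [matE, vecMul, dotProduct, Matrix.single_apply, ite_and, eq_comm]

theorem vecMul_matY_apply (r s c : Fin n) :
    (u ᵥ* matY n r s) c
      = (√2 : ℂ)⁻¹ * ((if c = s then u r else 0) - if c = r then u s else 0) := by
  simp [matY, vecMul_smul, vecMul_sub, vecMul_matE_apply]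

theorem vecMul_I_smul_matX_apply (r s c : Fin n) :
    (u ᵥ* (Complex.I • matX n r s)) c
      = Complex.I * ((√2 : ℂ)⁻¹ * ((if c = s then u r else 0) + if c = r then u s else 0)) := by
  simp [matX, vecMul_smul, vecMul_add, vecMul_matE_apply, mul_add]

theorem basisSumU_vecMul_mul_vecMul (c d : Fin n) :
    basisSumU n (fun Z => (u ᵥ* Z) c * (v ᵥ* Z) d) = -(u d * v c) := by
  have hsqrt : (√2 : ℂ)⁻¹ * (√2 : ℂ)⁻¹ = 1 / 2 := by
    rw [← mul_inv, ← Complex.ofReal_mul, Real.mul_self_sqrt zero_le_two]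
    norm_num
  have pairYX (A B C D : ℂ) : ((√2 : ℂ)⁻¹ * (A - B)) * ((√2 : ℂ)⁻¹ * (C - D))
      + (Complex.I * ((√2 : ℂ)⁻¹ * (A + B))) * (Complex.I * ((√2 : ℂ)⁻¹ * (C + D)))
        = -(A * D + B * C) := by
    linear_combination (-2 * (A * D + B * C)) * hsqrt
      + ((√2 : ℂ)⁻¹ * (A + B)) * ((√2 : ℂ)⁻¹ * (C + D)) * Complex.I_sq
  have offDiag (r s : Fin n) :
      (u ᵥ* matY n r s) c * (v ᵥ* matY n r s) d
        + (u ᵥ* (Complex.I • matX n r s)) c * (v ᵥ* (Complex.I • matX n r s)) d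
      = -((if c = s ∧ d = r then u d * v c else 0) + if c = r ∧ d = s then u d * v c else 0) := by
    rw [vecMul_matY_apply, vecMul_matY_apply, vecMul_I_smul_matX_apply,
      vecMul_I_smul_matX_apply, pairYX]
    split_ifs <;> simp_all
  have diag (t : Fin n) :
      (u ᵥ* (Complex.I • matE n t t)) c * (v ᵥ* (Complex.I • matE n t t)) d
        = -(if c = t ∧ d = t then u d * v c else 0) := by
    simp only [vecMul_smul, Pi.smul_apply, smul_eq_mul, mul_mul_mul_comm Complex.I,
      Complex.I_mul_I, neg_one_mul, vecMul_matE_apply, ite_zero_mul_ite_zero]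
    split_ifs with h
    · obtain ⟨rfl, rfl⟩ := h; rfl
    · rfl
  have upper (r s : Fin n) :
      (if r < s then -((if c = s ∧ d = r then u d * v c else 0)
          + if c = r ∧ d = s then u d * v c else 0) else 0)
        = -(if r = d ∧ s = c ∧ d < c then u d * v c else 0)
          - if r = c ∧ s = d ∧ c < d then u d * v c else 0 := by
    split_ifs <;> grind
  simp only [basisSumU, offDiag, upper, diag]
  simp only [ite_and, Finset.sum_sub_distrib, Finset.sum_neg_distrib, Finset.sum_ite_eq,
    Finset.mem_univ, if_true]
  rcases lt_trichotomy c d with h | rfl | h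
  · simp [h, h.ne', not_lt_of_gt h]
  · simp
  · simp [h, h.ne, not_lt_of_gt h]

end

theorem kappa_coeff_unitary_general (n : ℕ) (j k α β : Fin n)
    (p : Matrix (Fin n) (Fin n) ℂ) :
    kappaU n (fun z => z j α) (fun z => z k β) p = -(p k α * p j β) := by
  rw [kappaU_eq_basisSumU]
  simp only [lieD1_entry, mul_apply_eq_vecMul]
  rw [basisSumU_vecMul_mul_vecMul, mul_comm]

/-- on `U(n)` the conformality operator satisfies
`κ(z_{jα}, z_{kβ}) = −z_{kα} z_{jβ}`. -/
theorem kappa_coeff_unitary (n : ℕ) (hn : 1 ≤ n) (j k α β : Fin n)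
    (p : Matrix (Fin n) (Fin n) ℂ) (hp : p ∈ Matrix.unitaryGroup (Fin n) ℂ) :
    kappaU n (fun z => z j α) (fun z => z k β) p = -(p k α * p j β) :=
  kappa_coeff_unitary_general n j k α β p

end
end
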